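/- Let d ≥ 1 and let (u_i)_{i=1}^{d²} be a SIC system on ℂ^d. Then Σ_{i=1}^{d²} (1/d)·|u_i ⊗ ū_i⟩⟨u_i ⊗ ū_i| = T_inv, i.e., the SIC-POVM realizes the operator T_inv := |φ⁰⟩⟨φ⁰| + (1/(d+1))(I − |φ⁰⟩⟨φ⁰|) on ℂ^d ⊗ ℂ^d. -/

import Mathlib

open scoped BigOperators ComplexInnerProductSpace
open Matrix MeasureTheory

noncomputable section

/-- `ℂ^d` with the standard Hermitian inner product. -/
abbrev V (d : ℕ) : Type := EuclideanSpace ℂ (Fin d)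

/-- `ℂ^d ⊗ ℂ^d`, identified with functions on `Fin d × Fin d`. -/
abbrev V2 (d : ℕ) : Type := EuclideanSpace ℂ (Fin d × Fin d)

/-- operators on `ℂ^d ⊗ ℂ^d`, as matrices. -/
abbrev Op2 (d : ℕ) : Type := Matrix (Fin d × Fin d) (Fin d × Fin d) ℂ

/-- tensor (Kronecker) product of vectors. -/
def tens {d : ℕ} (u v : V d) : V2 d := WithLp.toLp 2 (fun p : Fin d × Fin d => u p.1 * v p.2)

/-- entrywise complex conjugate `ū` of a vector. -/
def cvec {d : ℕ} (u : V d) : V d := WithLp.toLp 2 (fun k => starRingEnd ℂ (u k))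

/-- the maximally entangled state `φ⁰ = (1/√d) Σ_k e_k ⊗ e_k`. -/
def phi0 (d : ℕ) : V2 d := WithLp.toLp 2 (fun p : Fin d × Fin d => if p.1 = p.2 then ((Real.sqrt d : ℂ))⁻¹ else 0)

/-- the rank-one operator `|w⟩⟨w|`. -/
def outer {d : ℕ} (w : V2 d) : Op2 d := Matrix.of fun p q => w p * starRingEnd ℂ (w q)

/-- `T_inv = |φ⁰⟩⟨φ⁰| + (1/(d+1))(I - |φ⁰⟩⟨φ⁰|)`. -/
def Tinv (d : ℕ) : Op2 d := outer (phi0 d) + (1 / ((d : ℂ) + 1)) • (1 - outer (phi0 d))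


/-- A SIC system on `ℂ^d`: `d²` unit vectors with `|⟨u_i, u_j⟩|² = 1/(d+1)` for `i ≠ j`. -/
def IsSIC {d : ℕ} (u : Fin (d ^ 2) → V d) : Prop :=
  (∀ i, ‖u i‖ = 1) ∧ ∀ i j, i ≠ j → ‖⟪u i, u j⟫‖ ^ 2 = 1 / (d + 1)

/-
Work in the Hilbert–Schmidt space of operators on `ℂ^d ⊗ ℂ^d`. With `w_i = u_i ⊗ ū_i`, both
`S = Σ (1/d)|w_i⟩⟨w_i|` and `T_inv` lie in the span of `I`, `|φ⁰⟩⟨φ⁰|` and the `|w_i⟩⟨w_i|`, so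
they are equal as soon as they have the same inner product with each of these operators. As
`⟪|w⟩⟨w|, |v⟩⟨v|⟫ = |⟨w, v⟩|²`, `|⟨w_i, w_j⟩|² = |⟨u_i, u_j⟩|⁴` is fixed by the SIC condition and
`⟨φ⁰, w_i⟩ = 1/√d`, these inner products are `d`, `1` and `2/(d+1)` for both operators.
-/

section InnerProduct

variable {𝕜 : Type*} [RCLike 𝕜]

theorem eq_of_inner_eq_of_mem_span {E : Type*} [NormedAddCommGroup E] [InnerProductSpace 𝕜 E]
    {s : Set E} {x y : E} (hx : x ∈ Submodule.span 𝕜 s) (hy : y ∈ Submodule.span 𝕜 s)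
    (h : ∀ z ∈ s, inner 𝕜 z x = inner 𝕜 z y) : x = y := by
  have hortho : Submodule.span 𝕜 s ⟂ Submodule.span 𝕜 {x - y} := by
    rw [Submodule.isOrtho_span]
    rintro z hz _ rfl
    rw [inner_sub_right, h z hz, sub_self]
  have := hortho.inner_eq (sub_mem hx hy) (Submodule.mem_span_singleton_self _)
  exact sub_eq_zero.1 (inner_self_eq_zero.1 this)

namespace Matrix

variable {m n : Type*}

def frobeniusVec : Matrix m n 𝕜 ≃ₗ[𝕜] EuclideanSpace 𝕜 (m × n) :=
  (ofLinearEquiv 𝕜).symm ≪≫ₗ (LinearEquiv.curry 𝕜 𝕜 m n).symm ≪≫ₗ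
    (WithLp.linearEquiv 2 𝕜 _).symm

@[simp]
theorem frobeniusVec_apply (A : Matrix m n 𝕜) (p : m × n) : frobeniusVec A p = A p.1 p.2 :=
  rfl

theorem inner_frobeniusVec [Fintype m] [Fintype n] (A B : Matrix m n 𝕜) :
    inner 𝕜 (frobeniusVec A) (frobeniusVec B) = ∑ i, ∑ j, starRingEnd 𝕜 (A i j) * B i j := by
  simp [PiLp.inner_apply, Fintype.sum_prod_type, mul_comm]

theorem inner_frobeniusVec_one_one [Fintype n] [DecidableEq n] :
    inner 𝕜 (frobeniusVec (1 : Matrix n n 𝕜)) (frobeniusVec 1) = Fintype.card n := by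
  rw [inner_frobeniusVec]
  simp [one_apply]

end Matrix

end InnerProduct

section Vectors

variable {d : ℕ}

theorem inner_tens (a b a' b' : V d) : ⟪tens a b, tens a' b'⟫ = ⟪a, a'⟫ * ⟪b, b'⟫ := by
  simp only [tens, PiLp.inner_apply, RCLike.inner_apply', Fintype.sum_prod_type,
    Finset.sum_mul_sum, map_mul]
  exact Finset.sum_congr rfl fun _ _ => Finset.sum_congr rfl fun _ _ => by ring

theorem inner_cvec (a b : V d) : ⟪cvec a, cvec b⟫ = ⟪b, a⟫ := by
  simp [cvec, PiLp.inner_apply, mul_comm]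

theorem inner_tens_cvec (a b : V d) :
    ⟪tens a (cvec a), tens b (cvec b)⟫ = (‖⟪a, b⟫‖ : ℂ) ^ 2 := by
  rw [inner_tens, inner_cvec, ← Complex.mul_conj', inner_conj_symm]

theorem inner_phi0_tens_cvec (a b : V d) :
    ⟪phi0 d, tens a (cvec b)⟫ = (Real.sqrt d : ℂ)⁻¹ * ⟪b, a⟫ := by
  simp only [phi0, tens, cvec, PiLp.inner_apply, RCLike.inner_apply, apply_ite (starRingEnd ℂ),
    map_inv₀, Complex.conj_ofReal, map_zero, mul_ite, mul_zero, Fintype.sum_prod_type,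
    Finset.sum_ite_eq, Finset.mem_univ, if_true, Finset.mul_sum]
  exact Finset.sum_congr rfl fun _ _ => by ring

theorem inner_phi0_self (hd : d ≠ 0) : ⟪phi0 d, phi0 d⟫ = 1 := by
  simp only [phi0, PiLp.inner_apply, RCLike.inner_apply, apply_ite (starRingEnd ℂ),
    map_inv₀, Complex.conj_ofReal, map_zero, mul_ite, ite_mul, mul_zero, zero_mul,
    Fintype.sum_prod_type, Finset.sum_ite_eq, Finset.mem_univ, if_true, Finset.sum_const,
    Finset.card_univ, Fintype.card_fin, nsmul_eq_mul]
  rw [← mul_inv, ← Complex.ofReal_mul, Real.mul_self_sqrt (Nat.cast_nonneg _),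
    Complex.ofReal_natCast, mul_inv_cancel₀ (Nat.cast_ne_zero.2 hd)]

theorem inner_frobeniusVec_outer (w v : V2 d) :
    ⟪Matrix.frobeniusVec (outer w), Matrix.frobeniusVec (outer v)⟫ = (‖⟪w, v⟫‖ : ℂ) ^ 2 := by
  rw [← Complex.mul_conj', inner_conj_symm, Matrix.inner_frobeniusVec]
  simp only [outer, Matrix.of_apply, PiLp.inner_apply, RCLike.inner_apply', map_mul,
    Complex.conj_conj, Finset.sum_mul_sum]
  exact Finset.sum_congr rfl fun _ _ => Finset.sum_congr rfl fun _ _ => by ring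

theorem inner_frobeniusVec_one_outer (w : V2 d) :
    ⟪Matrix.frobeniusVec 1, Matrix.frobeniusVec (outer w)⟫ = ⟪w, w⟫ := by
  rw [Matrix.inner_frobeniusVec]
  simp only [outer, Matrix.of_apply, Matrix.one_apply, PiLp.inner_apply, RCLike.inner_apply',
    apply_ite (starRingEnd ℂ), map_one, map_zero, ite_mul, one_mul, zero_mul, Finset.sum_ite_eq,
    Finset.mem_univ, if_true]
  exact Finset.sum_congr rfl fun _ _ => mul_comm _ _

theorem inner_frobeniusVec_outer_one (w : V2 d) :
    ⟪Matrix.frobeniusVec (outer w), Matrix.frobeniusVec 1⟫ = ⟪w, w⟫ := by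
  rw [← inner_conj_symm, inner_frobeniusVec_one_outer, inner_conj_symm]

end Vectors

section UnitVector

variable {d : ℕ} {a : V d}

theorem inner_tens_cvec_self_of_norm_eq_one (ha : ‖a‖ = 1) :
    ⟪tens a (cvec a), tens a (cvec a)⟫ = 1 := by
  rw [inner_tens_cvec, inner_self_eq_norm_sq_to_K, ha]
  simp

theorem inner_frobeniusVec_outer_phi0_outer_tens_cvec (ha : ‖a‖ = 1) :
    ⟪Matrix.frobeniusVec (outer (phi0 d)), Matrix.frobeniusVec (outer (tens a (cvec a)))⟫ =
      (d : ℂ)⁻¹ := by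
  rw [inner_frobeniusVec_outer, inner_phi0_tens_cvec, inner_self_eq_norm_sq_to_K, ha]
  simp [← Complex.ofReal_pow]

theorem inner_frobeniusVec_outer_tens_cvec_outer_phi0 (ha : ‖a‖ = 1) :
    ⟪Matrix.frobeniusVec (outer (tens a (cvec a))), Matrix.frobeniusVec (outer (phi0 d))⟫ =
      (d : ℂ)⁻¹ := by
  rw [← inner_conj_symm, inner_frobeniusVec_outer_phi0_outer_tens_cvec ha]
  simp

end UnitVector

section Moments

variable {d : ℕ}

theorem inner_frobeniusVec_Tinv (z : EuclideanSpace ℂ ((Fin d × Fin d) × (Fin d × Fin d))) :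
    ⟪z, Matrix.frobeniusVec (Tinv d)⟫ = ⟪z, Matrix.frobeniusVec (outer (phi0 d))⟫ +
      1 / ((d : ℂ) + 1) *
        (⟪z, Matrix.frobeniusVec 1⟫ - ⟪z, Matrix.frobeniusVec (outer (phi0 d))⟫) := by
  simp only [Tinv, map_add, map_smul, map_sub, inner_add_right, inner_smul_right, inner_sub_right]

theorem inner_frobeniusVec_one_Tinv (hd : d ≠ 0) :
    ⟪Matrix.frobeniusVec 1, Matrix.frobeniusVec (Tinv d)⟫ = d := by
  have : (d : ℂ) + 1 ≠ 0 := by exact_mod_cast d.succ_ne_zero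
  rw [inner_frobeniusVec_Tinv, inner_frobeniusVec_one_outer, inner_phi0_self hd,
    Matrix.inner_frobeniusVec_one_one, Fintype.card_prod, Fintype.card_fin]
  field_simp
  push_cast
  ring

theorem inner_frobeniusVec_outer_phi0_Tinv (hd : d ≠ 0) :
    ⟪Matrix.frobeniusVec (outer (phi0 d)), Matrix.frobeniusVec (Tinv d)⟫ = 1 := by
  rw [inner_frobeniusVec_Tinv, inner_frobeniusVec_outer_one, inner_frobeniusVec_outer,
    inner_phi0_self hd]
  simp

theorem inner_frobeniusVec_outer_tens_cvec_Tinv {a : V d} (hd : d ≠ 0) (ha : ‖a‖ = 1) :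
    ⟪Matrix.frobeniusVec (outer (tens a (cvec a))), Matrix.frobeniusVec (Tinv d)⟫ =
      2 / ((d : ℂ) + 1) := by
  have : (d : ℂ) + 1 ≠ 0 := by exact_mod_cast d.succ_ne_zero
  have : (d : ℂ) ≠ 0 := by exact_mod_cast hd
  rw [inner_frobeniusVec_Tinv, inner_frobeniusVec_outer_tens_cvec_outer_phi0 ha,
    inner_frobeniusVec_outer_one, inner_tens_cvec_self_of_norm_eq_one ha]
  field_simp
  ring

def sicPovmOp (u : Fin (d ^ 2) → V d) : Op2 d :=
  ∑ i, (d : ℂ)⁻¹ • outer (tens (u i) (cvec (u i)))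

theorem inner_frobeniusVec_sicPovmOp (u : Fin (d ^ 2) → V d)
    (z : EuclideanSpace ℂ ((Fin d × Fin d) × (Fin d × Fin d))) :
    ⟪z, Matrix.frobeniusVec (sicPovmOp u)⟫ =
      (d : ℂ)⁻¹ * ∑ i, ⟪z, Matrix.frobeniusVec (outer (tens (u i) (cvec (u i))))⟫ := by
  simp only [sicPovmOp, map_sum, map_smul, inner_sum, inner_smul_right, Finset.mul_sum]

end Moments

namespace IsSIC

variable {d : ℕ} {u : Fin (d ^ 2) → V d}

theorem inner_frobeniusVec_outer_tens_cvec (hu : IsSIC u) (i j : Fin (d ^ 2)) :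
    ⟪Matrix.frobeniusVec (outer (tens (u i) (cvec (u i)))),
      Matrix.frobeniusVec (outer (tens (u j) (cvec (u j))))⟫ =
      if i = j then 1 else ((d : ℂ) + 1)⁻¹ ^ 2 := by
  split_ifs with h
  · rw [h, _root_.inner_frobeniusVec_outer, inner_tens_cvec_self_of_norm_eq_one (hu.1 j)]
    simp
  · rw [_root_.inner_frobeniusVec_outer, inner_tens_cvec, norm_pow, Complex.norm_real, norm_norm,
      hu.2 i j h]
    push_cast
    ring

theorem inner_frobeniusVec_one_sicPovmOp (hu : IsSIC u) (hd : d ≠ 0) :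
    ⟪Matrix.frobeniusVec 1, Matrix.frobeniusVec (sicPovmOp u)⟫ = d := by
  simp only [inner_frobeniusVec_sicPovmOp, inner_frobeniusVec_one_outer,
    inner_tens_cvec_self_of_norm_eq_one (hu.1 _), Finset.sum_const, Finset.card_univ,
    Fintype.card_fin, nsmul_eq_mul, mul_one]
  have : (d : ℂ) ≠ 0 := by exact_mod_cast hd
  push_cast
  field_simp

theorem inner_frobeniusVec_outer_phi0_sicPovmOp (hu : IsSIC u) (hd : d ≠ 0) :
    ⟪Matrix.frobeniusVec (outer (phi0 d)), Matrix.frobeniusVec (sicPovmOp u)⟫ = 1 := by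
  simp only [inner_frobeniusVec_sicPovmOp,
    inner_frobeniusVec_outer_phi0_outer_tens_cvec (hu.1 _), Finset.sum_const, Finset.card_univ,
    Fintype.card_fin, nsmul_eq_mul]
  have : (d : ℂ) ≠ 0 := by exact_mod_cast hd
  push_cast
  field_simp

theorem inner_frobeniusVec_outer_tens_cvec_sicPovmOp (hu : IsSIC u) (hd : d ≠ 0)
    (j : Fin (d ^ 2)) :
    ⟪Matrix.frobeniusVec (outer (tens (u j) (cvec (u j)))),
      Matrix.frobeniusVec (sicPovmOp u)⟫ = 2 / ((d : ℂ) + 1) := by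
  have hsplit : ∀ i, (if j = i then (1 : ℂ) else ((d : ℂ) + 1)⁻¹ ^ 2) =
      (if j = i then 1 - ((d : ℂ) + 1)⁻¹ ^ 2 else 0) + ((d : ℂ) + 1)⁻¹ ^ 2 := by
    intro i
    split_ifs <;> ring
  simp only [inner_frobeniusVec_sicPovmOp, hu.inner_frobeniusVec_outer_tens_cvec, hsplit,
    Finset.sum_add_distrib, Finset.sum_ite_eq, Finset.mem_univ, if_true, Finset.sum_const,
    Finset.card_univ, Fintype.card_fin, nsmul_eq_mul]
  have : (d : ℂ) + 1 ≠ 0 := by exact_mod_cast d.succ_ne_zero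
  have : (d : ℂ) ≠ 0 := by exact_mod_cast hd
  push_cast
  field_simp
  ring

end IsSIC

/-- A SIC-POVM realizes `T_inv`: `Σ_i (1/d)|u_i ⊗ ū_i⟩⟨u_i ⊗ ū_i| = T_inv`. -/
theorem stmt3 (d : ℕ) (hd : 1 ≤ d) (u : Fin (d ^ 2) → V d) (hu : IsSIC u) :
    ∑ i, ((d : ℂ))⁻¹ • outer (tens (u i) (cvec (u i))) = Tinv d := by
  show sicPovmOp u = Tinv d
  have hd0 : d ≠ 0 := by omega
  let s : Set (Op2 d) :=
    insert 1 (insert (outer (phi0 d)) (Set.range fun i => outer (tens (u i) (cvec (u i)))))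
  have hmem : ∀ A ∈ s, A ∈ Submodule.span ℂ s := fun _ hA => Submodule.subset_span hA
  have hS : sicPovmOp u ∈ Submodule.span ℂ s :=
    Submodule.sum_mem _ fun i _ => Submodule.smul_mem _ _ (hmem _ (by simp [s]))
  have hT : Tinv d ∈ Submodule.span ℂ s := by
    refine add_mem ?_ (Submodule.smul_mem _ _ (sub_mem ?_ ?_)) <;> exact hmem _ (by simp [s])
  apply Matrix.frobeniusVec.injective
  refine eq_of_inner_eq_of_mem_span
    (Submodule.apply_mem_span_image_of_mem_span Matrix.frobeniusVec.toLinearMap hS)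
    (Submodule.apply_mem_span_image_of_mem_span Matrix.frobeniusVec.toLinearMap hT) ?_
  rintro _ ⟨A, rfl | rfl | ⟨j, rfl⟩, rfl⟩
  · exact (hu.inner_frobeniusVec_one_sicPovmOp hd0).trans (inner_frobeniusVec_one_Tinv hd0).symm
  · exact (hu.inner_frobeniusVec_outer_phi0_sicPovmOp hd0).trans
      (inner_frobeniusVec_outer_phi0_Tinv hd0).symm
  · exact (hu.inner_frobeniusVec_outer_tens_cvec_sicPovmOp hd0 j).trans
      (inner_frobeniusVec_outer_tens_cvec_Tinv hd0 (hu.1 j)).symm
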